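/- Let V be a finite-dimensional real vector space and L ⊆ 𝕋_ℂV a lagrangian subspace with real index r = dim_ℂ(L ∩ L̄). Set K := (L ∩ L̄) ∩ 𝕋V, the real points of L ∩ L̄. Then: (i) K is an isotropic subspace of 𝕋V with dim_ℝ K = r and L ∩ L̄ equals the complexification K_ℂ of K; (ii) the pairing of 𝕋V induces a well-defined nondegenerate symmetric bilinear form on K^⊥/K (K^⊥ the orthogonal of K in 𝕋V); and (iii) there exists a unique ℝ-linear map J : K^⊥/K → K^⊥/K with J² = −id and ⟨Ju, v⟩ + ⟨u, Jv⟩ = 0 for the induced pairing, such that under the canonical isomorphism (L+L̄)/(L∩L̄) ≅ (K^⊥/K)_ℂ, the image of L equals the +i-eigenspace of the complexification of J. -/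

import Mathlib

open TensorProduct Module

noncomputable section

namespace CDirac


/-- The real generalized tangent space `V ⊕ V*`. -/
abbrev TR (V : Type*) [AddCommGroup V] [Module ℝ V] := V × (V →ₗ[ℝ] ℝ)

variable {V : Type*} [AddCommGroup V] [Module ℝ V]

instance : AddCommGroup (V →ₗ[ℝ] ℝ) := LinearMap.addCommGroup

/-- The canonical pairing `⟨X+ξ, Y+η⟩ = (η X + ξ Y)/2` on `𝕋V`. -/
def pairR (a b : TR V) : ℝ := (b.2 a.1 + a.2 b.1) / 2

lemma pairR_add_left (a a' b : TR V) : pairR (a + a') b = pairR a b + pairR a' b := by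
  simp only [pairR, Prod.fst_add, Prod.snd_add, map_add, LinearMap.add_apply]
  ring

lemma pairR_smul_left (c : ℝ) (a b : TR V) : pairR (c • a) b = c * pairR a b := by
  simp only [pairR, Prod.smul_fst, Prod.smul_snd, map_smul, LinearMap.smul_apply,
    smul_eq_mul]
  ring

/-- Orthogonal complement with respect to the pairing on `𝕋V`. -/
def orthR (L : Submodule ℝ (TR V)) : Submodule ℝ (TR V) where
  carrier := {a | ∀ b ∈ L, pairR a b = 0}
  zero_mem' := fun b _ => by simp [pairR]
  add_mem' := fun {a a'} ha ha' b hb => by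
    rw [pairR_add_left, ha b hb, ha' b hb, add_zero]
  smul_mem' := fun c a ha b hb => by rw [pairR_smul_left, ha b hb, mul_zero]

/-- A real lagrangian subspace: `L = L^⊥`. -/
def IsLagrangianR (L : Submodule ℝ (TR V)) : Prop := L = orthR L

/-- An isotropic subspace of `𝕋V`. -/
def IsIsotropicR (K : Submodule ℝ (TR V)) : Prop := ∀ a ∈ K, ∀ b ∈ K, pairR a b = 0

/-- The quotient `K^⊥/K`. -/
abbrev quotK (K : Submodule ℝ (TR V)) := ↥(orthR K) ⧸ (K.comap (orthR K).subtype)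

/-- The quotient map `K^⊥ → K^⊥/K`. -/
def mkK (K : Submodule ℝ (TR V)) : ↥(orthR K) →ₗ[ℝ] quotK K :=
  (K.comap (orthR K).subtype).mkQ




/-- The complexification `V_ℂ = ℂ ⊗_ℝ V`. -/
abbrev Cx (V : Type*) [AddCommGroup V] [Module ℝ V] := ℂ ⊗[ℝ] V

/-- The complex dual `(V_ℂ)^*`. -/
abbrev DualC (V : Type*) [AddCommGroup V] [Module ℝ V] := Cx V →ₗ[ℂ] ℂ

/-- The complexified generalized tangent space `𝕋_ℂ V = V_ℂ ⊕ (V_ℂ)^*`. -/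
abbrev TCx (V : Type*) [AddCommGroup V] [Module ℝ V] := Cx V × DualC V

/-- The ℂ-bilinear pairing on `𝕋_ℂ V`. -/
def pairC (a b : TCx V) : ℂ := (b.2 a.1 + a.2 b.1) / 2

lemma pairC_add_left (a a' b : TCx V) : pairC (a + a') b = pairC a b + pairC a' b := by
  simp only [pairC, Prod.fst_add, Prod.snd_add, map_add, LinearMap.add_apply]
  ring

lemma pairC_smul_left (c : ℂ) (a b : TCx V) : pairC (c • a) b = c * pairC a b := by
  simp only [pairC, Prod.smul_fst, Prod.smul_snd, map_smul, LinearMap.smul_apply,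
    smul_eq_mul]
  ring

/-- Orthogonal complement with respect to the ℂ-bilinear pairing on `𝕋_ℂ V`. -/
def orthC (L : Submodule ℂ (TCx V)) : Submodule ℂ (TCx V) where
  carrier := {a | ∀ b ∈ L, pairC a b = 0}
  zero_mem' := fun b _ => by simp [pairC]
  add_mem' := fun {a a'} ha ha' b hb => by
    rw [pairC_add_left, ha b hb, ha' b hb, add_zero]
  smul_mem' := fun c a ha b hb => by rw [pairC_smul_left, ha b hb, mul_zero]

/-- A complex lagrangian subspace: `L = L^⊥`. -/
def IsLagrangianC (L : Submodule ℂ (TCx V)) : Prop := L = orthC L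

private lemma conjCxAux_smul (z : ℂ) (x : Cx V) :
    TensorProduct.map Complex.conjAe.toLinearMap LinearMap.id (z • x) =
      starRingEnd ℂ z • TensorProduct.map Complex.conjAe.toLinearMap LinearMap.id x := by
  induction x using TensorProduct.induction_on with
  | zero => simp
  | tmul w v => simp [smul_tmul', smul_eq_mul, Complex.conjAe_coe, map_mul]
  | add x y hx hy => simp only [smul_add, map_add, hx, hy]

/-- Conjugation on `V_ℂ`, as a `conj`-semilinear map. -/
def conjCx : Cx V →ₛₗ[starRingEnd ℂ] Cx V where
  toFun := TensorProduct.map Complex.conjAe.toLinearMap LinearMap.id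
  map_add' := map_add _
  map_smul' := conjCxAux_smul

lemma conjCx_smul (z : ℂ) (x : Cx V) :
    conjCx (z • x) = starRingEnd ℂ z • conjCx x := conjCxAux_smul z x

/-- Conjugation of a complex linear functional. -/
def conjDualFun (ξ : DualC V) : DualC V where
  toFun x := starRingEnd ℂ (ξ (conjCx x))
  map_add' x y := by simp
  map_smul' z x := by
    rw [conjCx_smul, map_smul, smul_eq_mul, map_mul, RingHom.id_apply]
    simp [smul_eq_mul]

/-- Conjugation on `(V_ℂ)^*`, as a `conj`-semilinear map. -/
def conjDual : DualC V →ₛₗ[starRingEnd ℂ] DualC V where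
  toFun := conjDualFun
  map_add' ξ η := by ext x; simp [conjDualFun]
  map_smul' z ξ := by
    ext x
    simp [conjDualFun, smul_eq_mul, map_mul]

/-- Conjugation on `𝕋_ℂ V`, as a `conj`-semilinear map. -/
def conjT : TCx V →ₛₗ[starRingEnd ℂ] TCx V where
  toFun a := (conjCx a.1, conjDual a.2)
  map_add' a b := by simp [Prod.ext_iff]
  map_smul' z a := by
    simp [Prod.ext_iff, Prod.smul_fst, Prod.smul_snd, map_smulₛₗ]

instance : RingHomSurjective (starRingEnd ℂ) :=
  ⟨fun z => ⟨starRingEnd ℂ z, by simp⟩⟩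

/-- The conjugate `L̄` of a ℂ-subspace of `𝕋_ℂ V`. -/
def conjSub (L : Submodule ℂ (TCx V)) : Submodule ℂ (TCx V) := L.map conjT

/-- The conjugate `Ē` of a ℂ-subspace of `V_ℂ`. -/
def conjE (E : Submodule ℂ (Cx V)) : Submodule ℂ (Cx V) := E.map conjCx

/-- The canonical inclusion `V → V_ℂ`, `v ↦ 1 ⊗ v`. -/
def iV : V →ₗ[ℝ] Cx V := TensorProduct.mk ℝ ℂ V 1





/-- ℝ-linear auxiliary version of the ℂ-linear extension of a real functional. -/
def dualExtAux (α : V →ₗ[ℝ] ℝ) : Cx V →ₗ[ℝ] ℂ :=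
  TensorProduct.lift
    (LinearMap.mk₂ ℝ (fun z v => z * (α v : ℂ))
      (fun z w v => by push_cast; ring)
      (fun r z v => by simp only [Complex.real_smul]; ring)
      (fun z v w => by push_cast [map_add]; ring)
      (fun r z v => by simp only [map_smul, smul_eq_mul, Complex.real_smul]; push_cast; ring))

private lemma dualExtAux_smulC (α : V →ₗ[ℝ] ℝ) (z : ℂ) (x : Cx V) :
    dualExtAux α (z • x) = z * dualExtAux α x := by
  induction x using TensorProduct.induction_on with
  | zero => simp
  | tmul w v =>
      simp only [dualExtAux, smul_tmul', lift.tmul, LinearMap.mk₂_apply, smul_eq_mul]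
      ring
  | add x y hx hy => simp only [smul_add, map_add, hx, hy]; ring

/-- The ℂ-linear extension of a real functional `α : V → ℝ` to `V_ℂ`. -/
def dualExtFun (α : V →ₗ[ℝ] ℝ) : DualC V where
  toFun := dualExtAux α
  map_add' := map_add _
  map_smul' z x := by simpa using dualExtAux_smulC α z x

private lemma dualExtFun_tmul (α : V →ₗ[ℝ] ℝ) (z : ℂ) (v : V) :
    dualExtFun α (z ⊗ₜ[ℝ] v) = z * (α v : ℂ) := by
  simp [dualExtFun, dualExtAux]

/-- The ℂ-linear extension map `V^* → (V_ℂ)^*`, as an ℝ-linear map. -/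
def dualExt : (V →ₗ[ℝ] ℝ) →ₗ[ℝ] DualC V where
  toFun := dualExtFun
  map_add' α β := by
    apply LinearMap.ext; intro x
    induction x using TensorProduct.induction_on with
    | zero => simp
    | tmul w v =>
        simp only [dualExtFun_tmul, LinearMap.add_apply]
        push_cast
        ring
    | add x y hx hy =>
        simp only [map_add, LinearMap.add_apply] at *
        rw [hx, hy]
  map_smul' r α := by
    apply LinearMap.ext; intro x
    induction x using TensorProduct.induction_on with
    | zero => simp
    | tmul w v =>
        simp only [dualExtFun_tmul, RingHom.id_apply, LinearMap.smul_apply,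
          LinearMap.smul_apply, smul_eq_mul, Complex.real_smul]
        push_cast
        ring
    | add x y hx hy =>
        simp only [map_add, RingHom.id_apply, LinearMap.smul_apply, smul_eq_mul] at *
        rw [hx, hy]

/-- The canonical inclusion `𝕋V → 𝕋_ℂV`. -/
def iT : TR V →ₗ[ℝ] TCx V where
  toFun a := (iV a.1, dualExt a.2)
  map_add' a b := by simp [Prod.ext_iff]
  map_smul' r a := by simp [Prod.ext_iff]



/-- Auxiliary ℝ-linear version of the ℂ-bilinear extension of a real bilinear form. -/
def bilinExtAux (B : V →ₗ[ℝ] V →ₗ[ℝ] ℝ) : Cx V →ₗ[ℝ] DualC V :=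
  TensorProduct.lift
    (LinearMap.mk₂ ℝ (fun z v => z • dualExt (B v))
      (fun z w v => by simp only [add_smul])
      (fun r z v => by simp only [smul_assoc])
      (fun z v w => by simp only [map_add, smul_add])
      (fun r z v => by simp only [map_smul]; exact smul_comm z r _))

private lemma bilinExtAux_smulC (B : V →ₗ[ℝ] V →ₗ[ℝ] ℝ) (z : ℂ) (x : Cx V) :
    bilinExtAux B (z • x) = z • bilinExtAux B x := by
  induction x using TensorProduct.induction_on with
  | zero => simp
  | tmul w v =>
      simp only [bilinExtAux, smul_tmul', lift.tmul, LinearMap.mk₂_apply, smul_eq_mul,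
        mul_smul]
  | add x y hx hy => simp only [smul_add, map_add, hx, hy]

/-- The ℂ-bilinear extension of a real bilinear form `B : V × V → ℝ` to `V_ℂ`. -/
def bilinExt (B : V →ₗ[ℝ] V →ₗ[ℝ] ℝ) : Cx V →ₗ[ℂ] DualC V where
  toFun := bilinExtAux B
  map_add' := map_add _
  map_smul' z x := by simpa using bilinExtAux_smulC B z x

/-- The `B`-transformation `e^B(X+ξ) = X + ξ + B̃(X,·)` of `𝕋_ℂV`, for a real `B`. -/
def eB (B : V →ₗ[ℝ] V →ₗ[ℝ] ℝ) : TCx V →ₗ[ℂ] TCx V where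
  toFun a := (a.1, a.2 + bilinExt B a.1)
  map_add' a b := by
    simp only [Prod.fst_add, Prod.snd_add, map_add, Prod.mk_add_mk, Prod.mk.injEq]
    exact ⟨trivial, by abel⟩
  map_smul' z a := by
    simp only [Prod.smul_fst, Prod.smul_snd, map_smul, RingHom.id_apply, Prod.smul_mk,
      Prod.mk.injEq, smul_add]

/-- The real `B`-transformation `e^B(X+α) = X + α + B(X,·)` of `𝕋V`. -/
def eBR (B : V →ₗ[ℝ] V →ₗ[ℝ] ℝ) : TR V →ₗ[ℝ] TR V where
  toFun a := (a.1, a.2 + B a.1)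
  map_add' a b := by
    simp only [Prod.fst_add, Prod.snd_add, map_add, Prod.mk_add_mk, Prod.mk.injEq]
    exact ⟨trivial, by abel⟩
  map_smul' r a := by
    simp only [Prod.smul_fst, Prod.smul_snd, map_smul, RingHom.id_apply, Prod.smul_mk,
      Prod.mk.injEq, smul_add]


/-- The range `E = pr_{V_ℂ}(L)` of a subspace of `𝕋_ℂV`. -/
def Esub (L : Submodule ℂ (TCx V)) : Submodule ℂ (Cx V) :=
  L.map (LinearMap.fst ℂ (Cx V) (DualC V))

/-- The real index `r = dim_ℂ (L ∩ L̄)`. -/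
def riL (L : Submodule ℂ (TCx V)) : ℕ := finrank ℂ ↥(L ⊓ conjSub L)

/-- The real part `K = (L ∩ L̄) ∩ 𝕋V`, as a subspace of `𝕋V`. -/
def Ksub (L : Submodule ℂ (TCx V)) : Submodule ℝ (TR V) :=
  ((L ⊓ conjSub L).restrictScalars ℝ).comap iT

/-- The distribution `D = (E + Ē) ∩ V`, as a subspace of `V`. -/
def Dsub (L : Submodule ℂ (TCx V)) : Submodule ℝ V :=
  ((Esub L ⊔ conjE (Esub L)).restrictScalars ℝ).comap iV

/-- The distribution `Δ = (E ∩ Ē) ∩ V`, as a subspace of `V`. -/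
def DeltaSub (L : Submodule ℂ (TCx V)) : Submodule ℝ V :=
  ((Esub L ⊓ conjE (Esub L)).restrictScalars ℝ).comap iV

/-- The order `s = dim V - dim D`. -/
def orderL (L : Submodule ℂ (TCx V)) : ℕ := finrank ℝ V - finrank ℝ ↥(Dsub L)

/-- The (normalized) type `k = dim_ℂ(E + Ē) - dim_ℂ E`. -/
def typeL (L : Submodule ℂ (TCx V)) : ℕ :=
  finrank ℂ ↥(Esub L ⊔ conjE (Esub L)) - finrank ℂ ↥(Esub L)


end CDirac

/-!
Every `a ∈ 𝕋_ℂV` decomposes as `a = Re a + i Im a` with `Re a, Im a ∈ 𝕋V`, so a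
conjugation-stable subspace such as `L ∩ L̄` is the complexification of its real points; this
gives (i). As `L` and `L̄` are lagrangian, `L + L̄ = (L ∩ L̄)^⊥ = (K^⊥)_ℂ`. Hence `a ↦ [Re a]`
maps `L` onto `K^⊥/K`, and if `Re a ∈ K ⊆ L` then `i Im a ∈ L`, so `Im a ∈ K`: the map
`J [Re a] := -[Im a]` is well defined. Multiplying by `i` inside `L` gives `J² = -1`, and
`Im ⟨a, b⟩ = 0` for `a, b ∈ L` says that `J` is skew. Part (ii) holds for every `K`, because
`K^⊥⊥ = K`.
-/

lemma LinearMap.BilinForm.orthogonal_sup {R M : Type*} [CommRing R] [AddCommGroup M] [Module R M]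
    (B : LinearMap.BilinForm R M) (N N' : Submodule R M) :
    B.orthogonal (N ⊔ N') = B.orthogonal N ⊓ B.orthogonal N' := by
  refine le_antisymm (le_inf (orthogonal_le le_sup_left) (orthogonal_le le_sup_right)) ?_
  rintro m ⟨h, h'⟩ n hn
  obtain ⟨x, hx, y, hy, rfl⟩ := Submodule.mem_sup.mp hn
  rw [map_add, LinearMap.add_apply, h x hx, h' y hy, add_zero]

def LinearMap.factorOfSurjective {R M N P : Type*} [Ring R] [AddCommGroup M]
    [AddCommGroup N] [AddCommGroup P] [Module R M] [Module R N] [Module R P] (f : M →ₗ[R] N)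
    (g : M →ₗ[R] P) (hf : Function.Surjective f) (hfg : LinearMap.ker f ≤ LinearMap.ker g) :
    N →ₗ[R] P :=
  (LinearMap.ker f).liftQ g hfg ∘ₗ (f.quotKerEquivOfSurjective hf).symm.toLinearMap

@[simp] lemma LinearMap.factorOfSurjective_apply {R M N P : Type*} [Ring R] [AddCommGroup M]
    [AddCommGroup N] [AddCommGroup P] [Module R M] [Module R N] [Module R P] (f : M →ₗ[R] N)
    (g : M →ₗ[R] P) (hf : Function.Surjective f) (hfg : LinearMap.ker f ≤ LinearMap.ker g)
    (x : M) : f.factorOfSurjective g hf hfg (f x) = g x := by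
  simp [LinearMap.factorOfSurjective, LinearMap.quotKerEquivOfSurjective_symm_apply]

namespace CDirac

section DualSumForm

variable (𝕜 M : Type*) [Field 𝕜] [AddCommGroup M] [Module 𝕜 M]

/-- `pairR` and `pairC` are both definitionally this form. -/
def dualSumForm : LinearMap.BilinForm 𝕜 (M × (M →ₗ[𝕜] 𝕜)) :=
  LinearMap.mk₂ 𝕜 (fun a b => (b.2 a.1 + a.2 b.1) / 2)
    (fun a a' b => by simp only [Prod.fst_add, Prod.snd_add, map_add, LinearMap.add_apply]; ring)
    (fun c a b => by
      simp only [Prod.smul_fst, Prod.smul_snd, map_smul, LinearMap.smul_apply, smul_eq_mul]; ring)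
    (fun a b b' => by simp only [Prod.fst_add, Prod.snd_add, map_add, LinearMap.add_apply]; ring)
    (fun c a b => by
      simp only [Prod.smul_fst, Prod.smul_snd, map_smul, LinearMap.smul_apply, smul_eq_mul]; ring)

variable {𝕜 M}

lemma dualSumForm_apply (a b : M × (M →ₗ[𝕜] 𝕜)) :
    dualSumForm 𝕜 M a b = (b.2 a.1 + a.2 b.1) / 2 := rfl

lemma dualSumForm_isSymm : (dualSumForm 𝕜 M).IsSymm :=
  ⟨fun a b => by simp only [dualSumForm_apply]; ring⟩

lemma dualSumForm_nondegenerate [NeZero (2 : 𝕜)] : (dualSumForm 𝕜 M).Nondegenerate := by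
  refine (LinearMap.IsRefl.nondegenerate_iff_separatingLeft
    (dualSumForm_isSymm.isRefl : LinearMap.IsRefl (dualSumForm 𝕜 M))).mpr fun a h => ?_
  have h2 : a.2 = 0 := LinearMap.ext fun x => by
    simpa [dualSumForm_apply, two_ne_zero] using h (x, 0)
  have h1 : a.1 = 0 := (Module.forall_dual_apply_eq_zero_iff 𝕜 a.1).mp fun φ => by
    simpa [dualSumForm_apply, h2, two_ne_zero] using h (0, φ)
  exact Prod.ext h1 h2

end DualSumForm

variable {V : Type*} [AddCommGroup V] [Module ℝ V]

open Complex

section RealImaginaryParts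

def reV : Cx V →ₗ[ℝ] V :=
  TensorProduct.lift (LinearMap.mk₂ ℝ (fun z v => z.re • v)
    (fun z w v => by simp [add_smul])
    (fun r z v => by rw [Complex.smul_re, smul_eq_mul, mul_smul])
    (fun z v w => by simp [smul_add])
    (fun r z v => by rw [smul_comm]))

def imV : Cx V →ₗ[ℝ] V :=
  TensorProduct.lift (LinearMap.mk₂ ℝ (fun z v => z.im • v)
    (fun z w v => by simp [add_smul])
    (fun r z v => by rw [Complex.smul_im, smul_eq_mul, mul_smul])
    (fun z v w => by simp [smul_add])
    (fun r z v => by rw [smul_comm]))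

@[simp] lemma reV_tmul (z : ℂ) (v : V) : reV (z ⊗ₜ[ℝ] v) = z.re • v := by simp [reV]
@[simp] lemma imV_tmul (z : ℂ) (v : V) : imV (z ⊗ₜ[ℝ] v) = z.im • v := by simp [imV]

@[simp] lemma reV_iV (v : V) : reV (iV v) = v := by simp [iV]
@[simp] lemma imV_iV (v : V) : imV (iV v) = 0 := by simp [iV]

@[simp] lemma reV_I_smul (x : Cx V) : reV (I • x) = -imV x := by
  induction x using TensorProduct.induction_on with
  | zero => simp
  | tmul z v => simp [TensorProduct.smul_tmul', Complex.mul_re, neg_smul]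
  | add x y hx hy => simp only [smul_add, map_add, hx, hy]; abel

@[simp] lemma imV_I_smul (x : Cx V) : imV (I • x) = reV x := by
  induction x using TensorProduct.induction_on with
  | zero => simp
  | tmul z v => simp [TensorProduct.smul_tmul', Complex.mul_im]
  | add x y hx hy => simp only [smul_add, map_add, hx, hy]

lemma reV_add_imV (x : Cx V) : iV (reV x) + I • iV (imV x) = x := by
  induction x using TensorProduct.induction_on with
  | zero => simp
  | tmul z v =>
      simp only [reV_tmul, imV_tmul, iV, TensorProduct.mk_apply, TensorProduct.tmul_smul,
        TensorProduct.smul_tmul', ← TensorProduct.add_tmul]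
      congr 1
      apply Complex.ext <;> simp
  | add x y hx hy => rw [map_add, map_add, map_add, map_add, smul_add, add_add_add_comm, hx, hy]

lemma conjCx_iV (v : V) : conjCx (iV v) = iV v := by
  simp [conjCx, iV, TensorProduct.map_tmul]

lemma dualC_ext {ξ η : DualC V} (h : ∀ v : V, ξ (iV v) = η (iV v)) : ξ = η := by
  refine LinearMap.ext fun x => ?_
  rw [← reV_add_imV x]
  simp only [map_add, map_smul, h]

lemma dualExt_iV (α : V →ₗ[ℝ] ℝ) (v : V) : dualExt α (iV v) = (α v : ℂ) := by
  change dualExtFun α ((1 : ℂ) ⊗ₜ[ℝ] v) = (α v : ℂ)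
  rw [dualExtFun_tmul, one_mul]

lemma conjDual_dualExt (α : V →ₗ[ℝ] ℝ) : conjDual (dualExt α) = dualExt α :=
  dualC_ext fun v => by simp [conjDual, conjDualFun, conjCx_iV, dualExt_iV]

def reD : DualC V →ₗ[ℝ] (V →ₗ[ℝ] ℝ) where
  toFun ξ :=
    { toFun := fun v => (ξ (iV v)).re
      map_add' := fun v w => by simp
      map_smul' := fun r v => by simp [LinearMap.map_smul_of_tower] }
  map_add' ξ η := by ext v; simp
  map_smul' r ξ := by ext v; simp

def imD : DualC V →ₗ[ℝ] (V →ₗ[ℝ] ℝ) where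
  toFun ξ :=
    { toFun := fun v => (ξ (iV v)).im
      map_add' := fun v w => by simp
      map_smul' := fun r v => by simp [LinearMap.map_smul_of_tower] }
  map_add' ξ η := by ext v; simp
  map_smul' r ξ := by ext v; simp

@[simp] lemma reD_apply (ξ : DualC V) (v : V) : reD ξ v = (ξ (iV v)).re := rfl
@[simp] lemma imD_apply (ξ : DualC V) (v : V) : imD ξ v = (ξ (iV v)).im := rfl

@[simp] lemma reD_dualExt (α : V →ₗ[ℝ] ℝ) : reD (dualExt α) = α := by
  ext v; simp [dualExt_iV]

@[simp] lemma imD_dualExt (α : V →ₗ[ℝ] ℝ) : imD (dualExt α) = 0 := by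
  ext v; simp [dualExt_iV]

@[simp] lemma reD_I_smul (ξ : DualC V) : reD (I • ξ) = -imD ξ := by
  ext v; simp [Complex.mul_re]

@[simp] lemma imD_I_smul (ξ : DualC V) : imD (I • ξ) = reD ξ := by
  ext v; simp [Complex.mul_im]

lemma reD_add_imD (ξ : DualC V) : dualExt (reD ξ) + I • dualExt (imD ξ) = ξ :=
  dualC_ext fun v => by
    simp only [LinearMap.add_apply, LinearMap.smul_apply, dualExt_iV, smul_eq_mul, reD_apply,
      imD_apply, mul_comm I]
    exact Complex.re_add_im _

def reT : TCx V →ₗ[ℝ] TR V := LinearMap.prodMap reV reD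

def imT : TCx V →ₗ[ℝ] TR V := LinearMap.prodMap imV imD

lemma reT_apply (a : TCx V) : reT a = (reV a.1, reD a.2) := rfl
lemma imT_apply (a : TCx V) : imT a = (imV a.1, imD a.2) := rfl

lemma reT_add_imT (a : TCx V) : iT (reT a) + I • iT (imT a) = a :=
  Prod.ext (by simpa [reT_apply, imT_apply, iT] using reV_add_imV a.1)
    (by simpa [reT_apply, imT_apply, iT] using reD_add_imD a.2)

@[simp] lemma reT_mix (u v : TR V) : reT (iT u + I • iT v) = u := by
  simp [reT_apply, iT]

@[simp] lemma imT_mix (u v : TR V) : imT (iT u + I • iT v) = v := by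
  simp [imT_apply, iT]

@[simp] lemma reT_iT (u : TR V) : reT (iT u) = u := by simpa using reT_mix u 0

@[simp] lemma imT_iT (u : TR V) : imT (iT u) = 0 := by simpa using imT_mix u 0

@[simp] lemma reT_I_smul (a : TCx V) : reT (I • a) = -imT a := by simp [reT_apply, imT_apply]

@[simp] lemma imT_I_smul (a : TCx V) : imT (I • a) = reT a := by simp [reT_apply, imT_apply]

lemma conjT_iT (u : TR V) : conjT (iT u) = iT u :=
  Prod.ext (conjCx_iV u.1) (conjDual_dualExt u.2)

lemma conjT_eq (a : TCx V) : conjT a = iT (reT a) - I • iT (imT a) := by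
  conv_lhs => rw [← reT_add_imT a]
  rw [map_add, map_smulₛₗ, conjT_iT, conjT_iT, Complex.conj_I, neg_smul, sub_eq_add_neg]

@[simp] lemma reT_conjT (a : TCx V) : reT (conjT a) = reT a := by
  rw [conjT_eq, sub_eq_add_neg, ← smul_neg, ← map_neg, reT_mix]

@[simp] lemma imT_conjT (a : TCx V) : imT (conjT a) = -imT a := by
  rw [conjT_eq, sub_eq_add_neg, ← smul_neg, ← map_neg, imT_mix]

@[simp] lemma conjT_conjT (a : TCx V) : conjT (conjT a) = a := by
  rw [conjT_eq (conjT a), reT_conjT, imT_conjT, map_neg, smul_neg, sub_neg_eq_add, reT_add_imT]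

lemma iT_reT (a : TCx V) : iT (reT a) = (2⁻¹ : ℂ) • (a + conjT a) := by
  conv_rhs => rw [conjT_eq, ← reT_add_imT a]
  rw [reT_mix, imT_mix, add_add_sub_cancel, ← two_smul ℂ, smul_smul, inv_mul_cancel₀ two_ne_zero,
    one_smul]

end RealImaginaryParts

section Complexification

def complexification (S : Submodule ℝ (TR V)) : Submodule ℂ (TCx V) where
  carrier := {a | reT a ∈ S ∧ imT a ∈ S}
  zero_mem' := by
    change reT 0 ∈ S ∧ imT 0 ∈ S
    simp only [map_zero]
    exact ⟨S.zero_mem, S.zero_mem⟩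
  add_mem' {a b} ha hb := by
    change reT (a + b) ∈ S ∧ imT (a + b) ∈ S
    simp only [map_add]
    exact ⟨S.add_mem ha.1 hb.1, S.add_mem ha.2 hb.2⟩
  smul_mem' z a ha := by
    have hz : z • a = z.re • a + z.im • I • a := by
      conv_lhs => rw [← Complex.re_add_im z]
      rw [add_smul, mul_smul, Complex.coe_smul, Complex.coe_smul]
      -- the real action on `TCx V` is the product one, not syntactically the restricted one
      rfl
    change reT (z • a) ∈ S ∧ imT (z • a) ∈ S
    simp only [hz, map_add, map_smul, reT_I_smul, imT_I_smul]
    exact ⟨S.add_mem (S.smul_mem _ ha.1) (S.smul_mem _ (S.neg_mem ha.2)),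
      S.add_mem (S.smul_mem _ ha.2) (S.smul_mem _ ha.1)⟩

def realPoints (W : Submodule ℂ (TCx V)) : Submodule ℝ (TR V) := (W.restrictScalars ℝ).comap iT

variable {S : Submodule ℝ (TR V)} {W : Submodule ℂ (TCx V)}

lemma mem_complexification {a : TCx V} :
    a ∈ complexification S ↔ reT a ∈ S ∧ imT a ∈ S := Iff.rfl

lemma iT_mem_complexification {u : TR V} (hu : u ∈ S) : iT u ∈ complexification S := by
  rw [mem_complexification, reT_iT, imT_iT]
  exact ⟨hu, S.zero_mem⟩

lemma complexification_eq_span (S : Submodule ℝ (TR V)) :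
    complexification S = Submodule.span ℂ (iT '' (S : Set (TR V))) := by
  refine le_antisymm (fun a ha => ?_) (Submodule.span_le.mpr ?_)
  · rw [← reT_add_imT a]
    exact Submodule.add_mem _ (Submodule.subset_span ⟨_, ha.1, rfl⟩)
      (Submodule.smul_mem _ _ (Submodule.subset_span ⟨_, ha.2, rfl⟩))
  · rintro _ ⟨u, hu, rfl⟩
    exact iT_mem_complexification hu

def complexificationEquivProd (S : Submodule ℝ (TR V)) :
    (complexification S).restrictScalars ℝ ≃ₗ[ℝ] S × S where
  toFun a := (⟨reT a, a.2.1⟩, ⟨imT a, a.2.2⟩)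
  invFun p := ⟨iT p.1 + I • iT p.2,
    (complexification S).add_mem (iT_mem_complexification p.1.2)
      ((complexification S).smul_mem I (iT_mem_complexification p.2.2))⟩
  map_add' a b := Prod.ext (Subtype.ext (map_add reT a.1 b.1)) (Subtype.ext (map_add imT a.1 b.1))
  map_smul' r a := by
    apply Prod.ext <;> apply Subtype.ext
    · exact map_smul reT r a.1
    · exact map_smul imT r a.1
  left_inv a := Subtype.ext (reT_add_imT a.1)
  right_inv p := Prod.ext (Subtype.ext (reT_mix _ _)) (Subtype.ext (imT_mix _ _))

lemma finrank_complexification [FiniteDimensional ℝ V] (S : Submodule ℝ (TR V)) :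
    finrank ℂ (complexification S) = finrank ℝ S := by
  have h := (complexificationEquivProd S).finrank_eq
  rw [Module.finrank_prod,
    ((Submodule.restrictScalarsEquiv ℝ ℂ _ _).restrictScalars ℝ).finrank_eq,
    ← Module.finrank_mul_finrank ℝ ℂ, Complex.finrank_real_complex] at h
  omega

lemma eq_complexification_realPoints (hW : ∀ a ∈ W, conjT a ∈ W) :
    W = complexification (realPoints W) := by
  ext a
  refine ⟨fun ha => ⟨?_, ?_⟩, fun ha => ?_⟩
  · change iT (reT a) ∈ W
    rw [iT_reT]
    exact W.smul_mem _ (W.add_mem ha (hW a ha))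
  · change iT (imT a) ∈ W
    have : iT (imT a) = iT (reT (-I • a)) := by simp
    rw [this, iT_reT]
    exact W.smul_mem _ (W.add_mem (W.smul_mem _ ha) (hW _ (W.smul_mem _ ha)))
  · rw [← reT_add_imT a]
    exact W.add_mem ha.1 (W.smul_mem _ ha.2)

end Complexification

section Pairing

lemma pairC_eq_dualSumForm (a b : TCx V) : pairC a b = dualSumForm ℂ (Cx V) a b := rfl

lemma pairR_comm (a b : TR V) : pairR a b = pairR b a := dualSumForm_isSymm.eq a b

lemma pairC_comm (a b : TCx V) : pairC a b = pairC b a := dualSumForm_isSymm.eq a b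

lemma orthR_eq_orthogonal (S : Submodule ℝ (TR V)) :
    orthR S = (dualSumForm ℝ V).orthogonal S := by
  ext a
  exact forall₂_congr fun b _ => by rw [pairR_comm]; rfl

lemma orthC_eq_orthogonal (M : Submodule ℂ (TCx V)) :
    orthC M = (dualSumForm ℂ (Cx V)).orthogonal M := by
  ext a
  exact forall₂_congr fun b _ => by rw [pairC_comm]; rfl

lemma orthR_orthR [FiniteDimensional ℝ V] (S : Submodule ℝ (TR V)) : orthR (orthR S) = S := by
  rw [orthR_eq_orthogonal, orthR_eq_orthogonal]
  exact LinearMap.BilinForm.orthogonal_orthogonal dualSumForm_nondegenerate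
    dualSumForm_isSymm.isRefl S

lemma orthC_orthC [FiniteDimensional ℝ V] (M : Submodule ℂ (TCx V)) : orthC (orthC M) = M := by
  rw [orthC_eq_orthogonal, orthC_eq_orthogonal]
  exact LinearMap.BilinForm.orthogonal_orthogonal dualSumForm_nondegenerate
    dualSumForm_isSymm.isRefl M

lemma pairC_iT (a b : TR V) : pairC (iT a) (iT b) = (pairR a b : ℂ) := by
  simp only [pairC, pairR, iT, LinearMap.coe_mk, AddHom.coe_mk, dualExt_iV]
  push_cast
  ring

lemma pairC_iT_right (a : TCx V) (s : TR V) :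
    pairC a (iT s) = (pairR (reT a) s : ℂ) + I * (pairR (imT a) s : ℂ) := by
  conv_lhs => rw [← reT_add_imT a]
  rw [pairC_add_left, pairC_smul_left, pairC_iT, pairC_iT]

lemma im_pairC (a b : TCx V) :
    (pairC a b).im = pairR (imT a) (reT b) + pairR (reT a) (imT b) := by
  conv_lhs => rw [← reT_add_imT b]
  rw [pairC_eq_dualSumForm, map_add, map_smul, ← pairC_eq_dualSumForm, ← pairC_eq_dualSumForm,
    pairC_iT_right, pairC_iT_right]
  simp

lemma orthC_complexification (S : Submodule ℝ (TR V)) :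
    orthC (complexification S) = complexification (orthR S) := by
  ext a
  refine ⟨fun h => ⟨fun s hs => ?_, fun s hs => ?_⟩, fun h b hb => ?_⟩
  · simpa [pairC_iT_right] using congrArg re (h (iT s) (iT_mem_complexification hs))
  · simpa [pairC_iT_right] using congrArg im (h (iT s) (iT_mem_complexification hs))
  · rw [← reT_add_imT b, pairC_eq_dualSumForm, map_add, map_smul, ← pairC_eq_dualSumForm,
      ← pairC_eq_dualSumForm, pairC_iT_right, pairC_iT_right, h.1 _ hb.1, h.2 _ hb.1, h.1 _ hb.2,
      h.2 _ hb.2]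
    simp

lemma conjCx_conjCx (x : Cx V) : conjCx (conjCx x) = x := congrArg Prod.fst (conjT_conjT (x, 0))

lemma pairC_conjT (a b : TCx V) : pairC (conjT a) (conjT b) = starRingEnd ℂ (pairC a b) := by
  change (starRingEnd ℂ (b.2 (conjCx (conjCx a.1))) +
    starRingEnd ℂ (a.2 (conjCx (conjCx b.1)))) / 2 = _
  rw [conjCx_conjCx, conjCx_conjCx, pairC, map_div₀, map_add, map_ofNat]

lemma mem_conjSub {M : Submodule ℂ (TCx V)} {a : TCx V} : a ∈ conjSub M ↔ conjT a ∈ M :=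
  ⟨by rintro ⟨b, hb, rfl⟩; rwa [conjT_conjT], fun h => ⟨conjT a, h, conjT_conjT a⟩⟩

lemma conjSub_orthC (M : Submodule ℂ (TCx V)) : conjSub (orthC M) = orthC (conjSub M) := by
  have key (a b : TCx V) : pairC (conjT a) b = starRingEnd ℂ (pairC a (conjT b)) := by
    rw [← pairC_conjT, conjT_conjT]
  ext a
  rw [mem_conjSub]
  refine ⟨fun h b hb => ?_, fun h b hb => ?_⟩
  · rw [← conjT_conjT a, key, h _ (mem_conjSub.mp hb), map_zero]
  · rw [key, h _ (mem_conjSub.mpr (by rwa [conjT_conjT])), map_zero]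

end Pairing

section Lagrangian

variable {L : Submodule ℂ (TCx V)}

lemma mem_Ksub_iff {u : TR V} : u ∈ Ksub L ↔ iT u ∈ L :=
  ⟨fun h => h.1, fun h => ⟨h, mem_conjSub.mpr (by rwa [conjT_iT])⟩⟩

lemma IsLagrangianC.pairC_eq_zero (hL : IsLagrangianC L) {a b : TCx V} (ha : a ∈ L)
    (hb : b ∈ L) : pairC a b = 0 :=
  (hL ▸ ha : a ∈ orthC L) b hb

lemma IsLagrangianC.conj (hL : IsLagrangianC L) : IsLagrangianC (conjSub L) := by
  unfold IsLagrangianC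
  conv_lhs => rw [hL]
  exact conjSub_orthC L

lemma inf_conjSub_eq_complexification (L : Submodule ℂ (TCx V)) :
    L ⊓ conjSub L = complexification (Ksub L) :=
  eq_complexification_realPoints fun _ ha =>
    ⟨mem_conjSub.mp ha.2, mem_conjSub.mpr (by rw [conjT_conjT]; exact ha.1)⟩

lemma finrank_Ksub [FiniteDimensional ℝ V] (L : Submodule ℂ (TCx V)) :
    finrank ℝ (Ksub L) = finrank ℂ ↥(L ⊓ conjSub L) := by
  rw [inf_conjSub_eq_complexification, finrank_complexification]

lemma IsLagrangianC.isIsotropicR_Ksub (hL : IsLagrangianC L) : IsIsotropicR (Ksub L) :=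
  fun a ha b hb => by exact_mod_cast (pairC_iT a b).symm.trans (hL.pairC_eq_zero ha.1 hb.1)

lemma IsLagrangianC.sup_conjSub_eq_orthC_inf [FiniteDimensional ℝ V] (hL : IsLagrangianC L) :
    L ⊔ conjSub L = orthC (L ⊓ conjSub L) := by
  have h : L ⊓ conjSub L = orthC (L ⊔ conjSub L) := by
    rw [orthC_eq_orthogonal, LinearMap.BilinForm.orthogonal_sup, ← orthC_eq_orthogonal,
      ← orthC_eq_orthogonal, ← hL, ← hL.conj]
  rw [h, orthC_orthC]

lemma IsLagrangianC.sup_conjSub_eq_complexification [FiniteDimensional ℝ V]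
    (hL : IsLagrangianC L) : L ⊔ conjSub L = complexification (orthR (Ksub L)) := by
  rw [hL.sup_conjSub_eq_orthC_inf, inf_conjSub_eq_complexification, orthC_complexification]

end Lagrangian

section QuotientForm

variable (K : Submodule ℝ (TR V))

lemma mkK_surjective : Function.Surjective (mkK K) := Submodule.mkQ_surjective _

lemma mkK_eq_mkK_iff {x y : orthR K} : mkK K x = mkK K y ↔ (x : TR V) - y ∈ K :=
  Submodule.Quotient.eq _

lemma mkK_eq_zero_iff {x : orthR K} : mkK K x = 0 ↔ (x : TR V) ∈ K :=
  Submodule.Quotient.mk_eq_zero _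

def quotForm : quotK K →ₗ[ℝ] quotK K →ₗ[ℝ] ℝ :=
  ((dualSumForm ℝ V).compl₁₂ (orthR K).subtype (orthR K).subtype).liftQ₂ _ _
    (fun _ hx => LinearMap.ext fun y => (pairR_comm _ _).trans (y.2 _ hx))
    (fun _ hy => LinearMap.ext fun x => x.2 _ hy)

lemma quotForm_mkK (x y : orthR K) : quotForm K (mkK K x) (mkK K y) = pairR (x : TR V) y := rfl

lemma quotForm_comm (q q' : quotK K) : quotForm K q q' = quotForm K q' q := by
  obtain ⟨x, rfl⟩ := mkK_surjective K q
  obtain ⟨y, rfl⟩ := mkK_surjective K q'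
  rw [quotForm_mkK, quotForm_mkK, pairR_comm]

lemma eq_quotForm (B : quotK K →ₗ[ℝ] quotK K →ₗ[ℝ] ℝ)
    (hB : ∀ x y : orthR K, B (mkK K x) (mkK K y) = pairR (x : TR V) y) : B = quotForm K := by
  refine LinearMap.ext fun q => LinearMap.ext fun q' => ?_
  obtain ⟨x, rfl⟩ := mkK_surjective K q
  obtain ⟨y, rfl⟩ := mkK_surjective K q'
  rw [hB, quotForm_mkK]

lemma quotForm_separatingLeft [FiniteDimensional ℝ V] : (quotForm K).SeparatingLeft := by
  intro q hq
  obtain ⟨x, rfl⟩ := mkK_surjective K q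
  have hx : (x : TR V) ∈ orthR (orthR K) := fun y hy => hq (mkK K ⟨y, hy⟩)
  rw [orthR_orthR] at hx
  exact (mkK_eq_zero_iff K).mpr hx

end QuotientForm

namespace IsLagrangianC

variable [FiniteDimensional ℝ V] {L : Submodule ℂ (TCx V)} (hL : IsLagrangianC L)
include hL

lemma reT_mem_orthR_Ksub {a : TCx V} (ha : a ∈ L) : reT a ∈ orthR (Ksub L) :=
  (hL.sup_conjSub_eq_complexification ▸ Submodule.mem_sup_left ha :
    a ∈ complexification (orthR (Ksub L))).1

lemma imT_mem_orthR_Ksub {a : TCx V} (ha : a ∈ L) : imT a ∈ orthR (Ksub L) :=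
  (hL.sup_conjSub_eq_complexification ▸ Submodule.mem_sup_left ha :
    a ∈ complexification (orthR (Ksub L))).2

def quotRe : L.restrictScalars ℝ →ₗ[ℝ] quotK (Ksub L) :=
  mkK (Ksub L) ∘ₗ LinearMap.codRestrict (orthR (Ksub L)) (reT ∘ₗ (L.restrictScalars ℝ).subtype)
    fun a => hL.reT_mem_orthR_Ksub a.2

def quotIm : L.restrictScalars ℝ →ₗ[ℝ] quotK (Ksub L) :=
  mkK (Ksub L) ∘ₗ LinearMap.codRestrict (orthR (Ksub L)) (imT ∘ₗ (L.restrictScalars ℝ).subtype)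
    fun a => hL.imT_mem_orthR_Ksub a.2

lemma quotRe_apply (a : L.restrictScalars ℝ) :
    hL.quotRe a = mkK (Ksub L) ⟨reT a, hL.reT_mem_orthR_Ksub a.2⟩ := rfl

lemma quotIm_apply (a : L.restrictScalars ℝ) :
    hL.quotIm a = mkK (Ksub L) ⟨imT a, hL.imT_mem_orthR_Ksub a.2⟩ := rfl

lemma quotRe_surjective : Function.Surjective hL.quotRe := by
  refine (mkK_surjective _).forall.mpr fun u => ?_
  have hu : iT (u : TR V) ∈ L ⊔ conjSub L := by
    rw [hL.sup_conjSub_eq_complexification]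
    exact iT_mem_complexification u.2
  obtain ⟨b, hb, _, ⟨c, hc, rfl⟩, hbc⟩ := Submodule.mem_sup.mp hu
  refine ⟨⟨b + c, L.add_mem hb hc⟩, congrArg (mkK _) (Subtype.ext ?_)⟩
  simpa using congrArg reT hbc

lemma ker_quotRe_le : LinearMap.ker hL.quotRe ≤ LinearMap.ker hL.quotIm := by
  intro a ha
  rw [LinearMap.mem_ker, quotRe_apply, mkK_eq_zero_iff, mem_Ksub_iff] at ha
  have him : I • iT (imT (a : TCx V)) ∈ L := by
    rw [← add_sub_cancel_left (iT (reT (a : TCx V))) (I • iT (imT (a : TCx V))), reT_add_imT]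
    exact L.sub_mem a.2 ha
  rw [LinearMap.mem_ker, quotIm_apply, mkK_eq_zero_iff, mem_Ksub_iff]
  simpa [smul_smul] using L.smul_mem (-I) him

lemma quotRe_I_smul (a : L.restrictScalars ℝ) :
    hL.quotRe ⟨I • a, L.smul_mem I a.2⟩ = -hL.quotIm a := by
  rw [quotRe_apply, quotIm_apply, ← map_neg]
  exact congrArg (mkK _) (Subtype.ext (reT_I_smul _))

lemma quotIm_I_smul (a : L.restrictScalars ℝ) :
    hL.quotIm ⟨I • a, L.smul_mem I a.2⟩ = hL.quotRe a :=
  congrArg (mkK _) (Subtype.ext (imT_I_smul _))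

def complexStructure : quotK (Ksub L) →ₗ[ℝ] quotK (Ksub L) :=
  -hL.quotRe.factorOfSurjective hL.quotIm hL.quotRe_surjective hL.ker_quotRe_le

lemma complexStructure_quotRe (a : L.restrictScalars ℝ) :
    hL.complexStructure (hL.quotRe a) = -hL.quotIm a := by
  simp [complexStructure]

lemma complexStructure_quotIm (a : L.restrictScalars ℝ) :
    hL.complexStructure (hL.quotIm a) = hL.quotRe a := by
  rw [← neg_neg (hL.quotIm a), ← quotRe_I_smul, map_neg, complexStructure_quotRe, quotIm_I_smul,
    neg_neg]

lemma complexStructure_complexStructure (q : quotK (Ksub L)) :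
    hL.complexStructure (hL.complexStructure q) = -q := by
  obtain ⟨a, rfl⟩ := hL.quotRe_surjective q
  rw [complexStructure_quotRe, map_neg, complexStructure_quotIm]

lemma quotForm_complexStructure_add (q q' : quotK (Ksub L)) :
    quotForm _ (hL.complexStructure q) q' + quotForm _ q (hL.complexStructure q') = 0 := by
  obtain ⟨a, rfl⟩ := hL.quotRe_surjective q
  obtain ⟨b, rfl⟩ := hL.quotRe_surjective q'
  rw [complexStructure_quotRe, complexStructure_quotRe, map_neg, map_neg, LinearMap.neg_apply,
    quotRe_apply, quotIm_apply, quotRe_apply, quotIm_apply, quotForm_mkK, quotForm_mkK,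
    ← neg_add, ← im_pairC, hL.pairC_eq_zero a.2 b.2, zero_im, neg_zero]

lemma mix_mem_iff_complexStructure {u v : TR V} (hu : u ∈ orthR (Ksub L))
    (hv : v ∈ orthR (Ksub L)) :
    iT u + I • iT v ∈ L ↔ hL.complexStructure (mkK _ ⟨u, hu⟩) = -mkK _ ⟨v, hv⟩ := by
  constructor
  · intro h
    simpa [quotRe_apply, quotIm_apply] using hL.complexStructure_quotRe ⟨_, h⟩
  · intro h
    obtain ⟨a, ha⟩ := hL.quotRe_surjective (mkK _ ⟨u, hu⟩)
    rw [← ha, complexStructure_quotRe, neg_inj] at h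
    rw [quotRe_apply, mkK_eq_mkK_iff, mem_Ksub_iff] at ha
    rw [quotIm_apply, mkK_eq_mkK_iff, mem_Ksub_iff] at h
    have e : iT u + I • iT v = (a : TCx V) - iT (reT a - u) - I • iT (imT a - v) := by
      rw [map_sub, map_sub]
      linear_combination (norm := module) reT_add_imT (a : TCx V)
    rw [e]
    exact L.sub_mem (L.sub_mem a.2 ha) (L.smul_mem I h)

lemma eq_complexStructure {J : quotK (Ksub L) →ₗ[ℝ] quotK (Ksub L)}
    (hJ : ∀ (u v : TR V) (hu : u ∈ orthR (Ksub L)) (hv : v ∈ orthR (Ksub L)),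
      iT u + I • iT v ∈ L ↔ J (mkK _ ⟨u, hu⟩) = -mkK _ ⟨v, hv⟩) :
    J = hL.complexStructure := by
  refine LinearMap.ext (hL.quotRe_surjective.forall.mpr fun a => ?_)
  rw [complexStructure_quotRe]
  exact (hJ (reT a) (imT a) (hL.reT_mem_orthR_Ksub a.2) (hL.imT_mem_orthR_Ksub a.2)).mp
    (by rw [reT_add_imT]; exact a.2)

end IsLagrangianC

end CDirac

open CDirac Module

/-- For a lagrangian `L ⊆ 𝕋_ℂV` of real index `r`, the real part
`K = (L ∩ L̄) ∩ 𝕋V` is isotropic of dimension `r` with `L ∩ L̄ = K_ℂ`; the pairing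
descends to a unique, nondegenerate, symmetric bilinear form on `K^⊥/K`; and there is a
unique skew `J` on `K^⊥/K` with `J² = -id` whose `+i`-eigenspace (of its
complexification) is the image of `L` in `(K^⊥/K)_ℂ ≅ (L + L̄)/(L ∩ L̄)`. -/
theorem stmt5 (V : Type*) [AddCommGroup V] [Module ℝ V] [FiniteDimensional ℝ V]
    (L : Submodule ℂ (TCx V)) (hL : IsLagrangianC L)
    (r : ℕ) (hr : r = finrank ℂ ↥(L ⊓ conjSub L))
    (K : Submodule ℝ (TR V)) (hK : K = Ksub L) :
    -- (i)
    (IsIsotropicR K ∧ finrank ℝ ↥K = r ∧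
      L ⊓ conjSub L = Submodule.span ℂ (iT '' (K : Set (TR V)))) ∧
    -- (ii)
    (∃ B : quotK K →ₗ[ℝ] quotK K →ₗ[ℝ] ℝ,
      ((∀ x y : ↥(orthR K), B (mkK K x) (mkK K y) = pairR (x : TR V) (y : TR V)) ∧
       (∀ q q' : quotK K, B q q' = B q' q) ∧
       (∀ q : quotK K, (∀ q' : quotK K, B q q' = 0) → q = 0)) ∧
      (∀ B' : quotK K →ₗ[ℝ] quotK K →ₗ[ℝ] ℝ,
        (∀ x y : ↥(orthR K), B' (mkK K x) (mkK K y) = pairR (x : TR V) (y : TR V)) →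
        B' = B)) ∧
    -- (iii)
    (∀ B : quotK K →ₗ[ℝ] quotK K →ₗ[ℝ] ℝ,
      (∀ x y : ↥(orthR K), B (mkK K x) (mkK K y) = pairR (x : TR V) (y : TR V)) →
      ∃! J : quotK K →ₗ[ℝ] quotK K,
        (∀ q : quotK K, J (J q) = -q) ∧
        (∀ q q' : quotK K, B (J q) q' + B q (J q') = 0) ∧
        (∀ (u v : TR V) (hu : u ∈ orthR K) (hv : v ∈ orthR K),
          (iT u + Complex.I • iT v ∈ L ↔ J (mkK K ⟨u, hu⟩) = - mkK K ⟨v, hv⟩))) := by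
  subst hK hr
  refine ⟨⟨hL.isIsotropicR_Ksub, finrank_Ksub L, by
      rw [inf_conjSub_eq_complexification, complexification_eq_span]⟩,
    ⟨quotForm _, ⟨quotForm_mkK _, quotForm_comm _, quotForm_separatingLeft _⟩, eq_quotForm _⟩,
    fun B hB => ?_⟩
  obtain rfl := eq_quotForm _ B hB
  exact ⟨hL.complexStructure,
    ⟨hL.complexStructure_complexStructure, hL.quotForm_complexStructure_add,
      fun _ _ => hL.mix_mem_iff_complexStructure⟩,
    fun _ hJ => hL.eq_complexStructure hJ.2.2⟩
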